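/- For every real z with 0 < z < 1, the hypergeometric values F(1/6,1/2,2/3;1−z) and F(1/6,1/2,1;z) are positive real numbers, Re φ₁(z) = −1/2, and Im φ₁(z) > √3/2. Moreover Im φ₁(z) → +∞ as z → 0⁺ along (0,1), and φ₁(z) → ω = (−1+√3 i)/2 as z → 1⁻ along (0,1). -/

import Mathlib

/-!
On `(0, 1)` both series have positive coefficients, so they are real and `≥ 1`, and
`B(1/6, 1/2)/π` is real. By the reflection formula it equals `√3 · F(1/6, 1/2, 1; 1)`, where the
value at `1` is `Γ(1/3)/(Γ(5/6) Γ(1/2))` by Gauss's summation theorem (obtained from Euler's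
integral). Together with `ω² = ω - √3 i` this gives `φ₁(z) = ω + √3 (r(z) - 1) i` with
`r(z) = F(1/6, 1/2, 1; 1) F(1/6, 1/2, 2/3; 1 - z) / F(1/6, 1/2, 1; z)`.
Since `F(1/6, 1/2, 1; z) < F(1/6, 1/2, 1; 1)`, `r > 1`. As `z → 0⁺`, `F(1/6, 1/2, 2/3; 1 - z) → ∞`
because `c = a + b` makes its coefficients decay like `1/n`; as `z → 1⁻`, Abel's theorem gives
`r(z) → 1`.
-/

open Complex

/-- Gauss hypergeometric series `F(a,b,c;z) = ∑ (a)_n (b)_n / ((c)_n n!) zⁿ`. -/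
noncomputable def hyperF (a b c z : ℂ) : ℂ :=
  ∑' n : ℕ, ((∏ k ∈ Finset.range n, (a + k)) * (∏ k ∈ Finset.range n, (b + k)) /
    ((∏ k ∈ Finset.range n, (c + k)) * (n.factorial : ℂ))) * z ^ n

/-- `ω = (−1 + √3 i)/2`, the primitive cube root of unity in the upper half-plane. -/
noncomputable def omegaC : ℂ := (-1 + Real.sqrt 3 * Complex.I) / 2

/-- The beta function `B(x,y) = Γ(x)Γ(y)/Γ(x+y)`. -/
noncomputable def betaFn (x y : ℂ) : ℂ :=
  Complex.Gamma x * Complex.Gamma y / Complex.Gamma (x + y)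

/-- Schwarz's map `φ₁` for `(a,b,c) = (1/6,1/2,1)`. -/
noncomputable def phi1 (z : ℂ) : ℂ :=
  omegaC ^ 2 + Complex.I * (betaFn (1/6) (1/2) / Real.pi) *
    hyperF (1/6) (1/2) (2/3) (1 - z) / hyperF (1/6) (1/2) 1 z

open Filter Topology Set MeasureTheory ProbabilityTheory Real

theorem ascPochhammer_eval_eq_prod_range {R : Type*} [CommSemiring R] (n : ℕ) (r : R) :
    (ascPochhammer R n).eval r = ∏ k ∈ Finset.range n, (r + k) := by
  induction n with
  | zero => simp
  | succ n ih => rw [ascPochhammer_succ_eval, ih, Finset.prod_range_succ]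

theorem Real.Gamma_add_nat {p : ℝ} (hp : 0 < p) (n : ℕ) :
    Real.Gamma (p + n) = (ascPochhammer ℝ n).eval p * Real.Gamma p := by
  induction n with
  | zero => simp
  | succ n ih =>
    rw [Nat.cast_succ, ← add_assoc, Real.Gamma_add_one (by positivity), ih,
      ascPochhammer_succ_eval]
    ring

namespace ProbabilityTheory

lemma beta_add_nat {p q : ℝ} (hp : 0 < p) (hq : 0 < q) (n : ℕ) :
    beta (p + n) q = (ascPochhammer ℝ n).eval p / (ascPochhammer ℝ n).eval (p + q) * beta p q := by
  have hpq : 0 < p + q := add_pos hp hq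
  have := (ascPochhammer_pos n _ hpq).ne'
  have := (Real.Gamma_pos_of_pos hpq).ne'
  rw [beta, beta, add_right_comm, Real.Gamma_add_nat hp, Real.Gamma_add_nat hpq]
  field_simp

lemma lintegral_rpow_mul_one_sub_rpow {p q : ℝ} (hp : 0 < p) (hq : 0 < q) :
    ∫⁻ x in Ioo 0 1, ENNReal.ofReal (x ^ (p - 1) * (1 - x) ^ (q - 1)) =
      ENNReal.ofReal (beta p q) := by
  have h := lintegral_betaPDF_eq_one hp hq
  simp_rw [lintegral_betaPDF, mul_assoc, ENNReal.ofReal_mul (one_div_pos.2 (beta_pos hp hq)).le,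
    one_div, ENNReal.ofReal_inv_of_pos (beta_pos hp hq)] at h
  rw [lintegral_const_mul' _ _ (by simp [beta_pos hp hq]), mul_comm] at h
  simpa using ENNReal.eq_inv_of_mul_eq_one_left h

lemma ae_restrict_rpow_mul_one_sub_rpow_nonneg (p q : ℝ) :
    0 ≤ᵐ[volume.restrict (Ioo 0 1)] fun x : ℝ ↦ x ^ (p - 1) * (1 - x) ^ (q - 1) :=
  ae_restrict_of_forall_mem measurableSet_Ioo fun _ hx ↦
    mul_nonneg (Real.rpow_nonneg hx.1.le _) (Real.rpow_nonneg (sub_nonneg.2 hx.2.le) _)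

lemma integrableOn_rpow_mul_one_sub_rpow {p q : ℝ} (hp : 0 < p) (hq : 0 < q) :
    IntegrableOn (fun x : ℝ ↦ x ^ (p - 1) * (1 - x) ^ (q - 1)) (Ioo 0 1) :=
  ⟨by fun_prop, (hasFiniteIntegral_iff_ofReal (ae_restrict_rpow_mul_one_sub_rpow_nonneg p q)).2
    (by simp [lintegral_rpow_mul_one_sub_rpow hp hq])⟩

lemma integral_rpow_mul_one_sub_rpow {p q : ℝ} (hp : 0 < p) (hq : 0 < q) :
    ∫ x in Ioo 0 1, x ^ (p - 1) * (1 - x) ^ (q - 1) = beta p q := by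
  rw [integral_eq_lintegral_of_nonneg_ae (ae_restrict_rpow_mul_one_sub_rpow_nonneg p q)
    (by fun_prop), lintegral_rpow_mul_one_sub_rpow hp hq, ENNReal.toReal_ofReal (beta_pos hp hq).le]

end ProbabilityTheory

theorem Real.hasSum_ascPochhammer_div_factorial_mul_pow (a : ℝ) {x : ℝ} (hx : |x| < 1) :
    HasSum (fun n ↦ (ascPochhammer ℝ n).eval a / n.factorial * x ^ n) ((1 - x) ^ (-a)) := by
  have h := (one_div_one_sub_rpow_hasFPowerSeriesOnBall_zero a).hasSum
    (y := x) (by simpa [Real.enorm_eq_ofReal_abs] using hx)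
  have h1 : 0 ≤ 1 - x := by linarith [(abs_lt.1 hx).2]
  rw [zero_add] at h
  rw [Real.rpow_neg h1, ← one_div]
  simp only [FormalMultilinearSeries.ofScalars_apply_eq, smul_eq_mul, ← Ring.multichoose_eq] at h
  have e (n : ℕ) : (ascPochhammer ℝ n).eval a / n.factorial = Ring.multichoose a n := by
    rw [div_eq_iff (by positivity), mul_comm, ← nsmul_eq_mul,
      Ring.factorial_nsmul_multichoose_eq_ascPochhammer, Polynomial.ascPochhammer_smeval_eq_eval]
  simpa only [e] using h

theorem Real.tendsto_tsum_powerSeries_nhdsLT_one_atTop {f : ℕ → ℝ} (hf : ∀ n, 0 ≤ f n)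
    (hdiv : ¬Summable f) (hs : ∀ x ∈ Ioo (0 : ℝ) 1, Summable fun n ↦ f n * x ^ n) :
    Tendsto (fun x ↦ ∑' n, f n * x ^ n) (𝓝[<] 1) atTop := by
  rw [not_summable_iff_tendsto_nat_atTop_of_nonneg hf] at hdiv
  refine tendsto_atTop.2 fun M ↦ ?_
  obtain ⟨N, hN⟩ := (hdiv.eventually_gt_atTop M).exists
  have hpoly : Tendsto (fun x : ℝ ↦ ∑ n ∈ Finset.range N, f n * x ^ n) (𝓝[<] 1)
      (𝓝 (∑ n ∈ Finset.range N, f n)) := by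
    simpa using ((by fun_prop : Continuous fun x : ℝ ↦ ∑ n ∈ Finset.range N, f n * x ^ n).tendsto
      1).mono_left nhdsWithin_le_nhds
  filter_upwards [hpoly.eventually_const_lt hN, Ioo_mem_nhdsLT zero_lt_one] with x hMx hx
  exact hMx.le.trans <| (hs x hx).sum_le_tsum _ fun n _ ↦ mul_nonneg (hf n) (pow_nonneg hx.1.le n)

section RealHypergeometric

variable {a b c x : ℝ}

lemma ordinaryHypergeometricCoefficient_succ (a b c : ℝ) (n : ℕ) :
    ordinaryHypergeometricCoefficient a b c (n + 1) =
      ordinaryHypergeometricCoefficient a b c n * ((a + n) * (b + n) / ((c + n) * (n + 1))) := by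
  simp only [ordinaryHypergeometricCoefficient, ascPochhammer_succ_eval, Nat.factorial_succ,
    Nat.cast_mul, div_eq_mul_inv, mul_inv]
  push_cast
  ring

lemma ordinaryHypergeometricCoefficient_pos (ha : 0 < a) (hb : 0 < b) (hc : 0 < c) (n : ℕ) :
    0 < ordinaryHypergeometricCoefficient a b c n := by
  have := ascPochhammer_pos n a ha
  have := ascPochhammer_pos n b hb
  have := ascPochhammer_pos n c hc
  unfold ordinaryHypergeometricCoefficient
  positivity

lemma ordinaryHypergeometric_eq_tsum_mul (a b c x : ℝ) :
    ₂F₁ a b c x = ∑' n, ordinaryHypergeometricCoefficient a b c n * x ^ n :=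
  ordinaryHypergeometric_sum_eq a b c x

lemma ordinaryHypergeometricSeries_radius_eq_one_of_pos (ha : 0 < a) (hb : 0 < b) (hc : 0 < c) :
    (ordinaryHypergeometricSeries ℝ a b c).radius = 1 :=
  ordinaryHypergeometricSeries_radius_eq_one ℝ a b c fun k ↦ by
    refine ⟨?_, ?_, ?_⟩ <;> intro h <;> linarith [(Nat.cast_nonneg k : (0 : ℝ) ≤ k)]

lemma summable_ordinaryHypergeometricCoefficient_mul_pow (ha : 0 < a) (hb : 0 < b) (hc : 0 < c)
    (hx : |x| < 1) : Summable fun n ↦ ordinaryHypergeometricCoefficient a b c n * x ^ n := by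
  have h := (ordinaryHypergeometricSeries ℝ a b c).summable_norm_apply (x := x)
    (by simpa [ordinaryHypergeometricSeries_radius_eq_one_of_pos ha hb hc,
      Real.enorm_eq_ofReal_abs] using hx)
  simp only [ordinaryHypergeometricSeries_apply_eq, smul_eq_mul] at h
  exact h.of_norm

lemma one_le_ordinaryHypergeometric (ha : 0 < a) (hb : 0 < b) (hc : 0 < c) (hx₀ : 0 ≤ x)
    (hx₁ : x < 1) : 1 ≤ ₂F₁ a b c x := by
  have hs := summable_ordinaryHypergeometricCoefficient_mul_pow ha hb hc
    (abs_lt.2 ⟨by linarith, hx₁⟩)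
  rw [ordinaryHypergeometric_eq_tsum_mul]
  simpa [ordinaryHypergeometricCoefficient] using hs.le_tsum 0 fun n _ ↦
    mul_nonneg (ordinaryHypergeometricCoefficient_pos ha hb hc n).le (pow_nonneg hx₀ n)

lemma ordinaryHypergeometric_lt_of_summable (ha : 0 < a) (hb : 0 < b) (hc : 0 < c)
    (hsum : Summable (ordinaryHypergeometricCoefficient a b c)) (hx₀ : 0 ≤ x) (hx₁ : x < 1) :
    ₂F₁ a b c x < ₂F₁ a b c 1 := by
  simp only [ordinaryHypergeometric_eq_tsum_mul, one_pow, mul_one]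
  refine Summable.tsum_lt_tsum (i := 1) (fun n ↦ ?_) ?_
    (summable_ordinaryHypergeometricCoefficient_mul_pow ha hb hc (abs_lt.2 ⟨by linarith, hx₁⟩))
    hsum
  · exact mul_le_of_le_one_right (ordinaryHypergeometricCoefficient_pos ha hb hc n).le
      (pow_le_one₀ hx₀ hx₁.le)
  · simpa using mul_lt_of_lt_one_right (ordinaryHypergeometricCoefficient_pos ha hb hc 1) hx₁

lemma tendsto_ordinaryHypergeometric_nhds_zero (ha : 0 < a) (hb : 0 < b) (hc : 0 < c) :
    Tendsto (fun x : ℝ ↦ ₂F₁ a b c x) (𝓝 0) (𝓝 1) := by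
  have h := (ordinaryHypergeometricSeries ℝ a b c).hasFPowerSeriesOnBall
    (by simp [ordinaryHypergeometricSeries_radius_eq_one_of_pos ha hb hc])
  rw [← ordinaryHypergeometric_zero (𝔸 := ℝ) a b c]
  exact h.hasFPowerSeriesAt.continuousAt.tendsto

lemma tendsto_ordinaryHypergeometric_nhdsLT_one
    (hsum : Summable (ordinaryHypergeometricCoefficient a b c)) :
    Tendsto (fun x : ℝ ↦ ₂F₁ a b c x) (𝓝[<] 1) (𝓝 (₂F₁ a b c 1)) := by
  simp only [ordinaryHypergeometric_eq_tsum_mul, one_pow, mul_one]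
  exact Real.tendsto_tsum_powerSeries_nhdsWithin_lt hsum.hasSum.tendsto_sum_nat

lemma div_le_natCast_mul_ordinaryHypergeometricCoefficient (ha : 0 < a) (hb : 0 < b)
    (hc : 0 < c) (hcab : c ≤ a + b) {n : ℕ} (hn : 1 ≤ n) :
    a * b / c ≤ n * ordinaryHypergeometricCoefficient a b c n := by
  induction n, hn using Nat.le_induction with
  | base => simp [ordinaryHypergeometricCoefficient, div_eq_mul_inv]
  | succ n hn ih =>
    have hcoef := ordinaryHypergeometricCoefficient_pos ha hb hc n
    have hstep : n * (c + n) ≤ (a + n) * (b + n) := by nlinarith [(Nat.cast_nonneg n : (0 : ℝ) ≤ n)]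
    calc a * b / c ≤ n * ordinaryHypergeometricCoefficient a b c n := ih
      _ ≤ ordinaryHypergeometricCoefficient a b c n * ((a + n) * (b + n) / (c + n)) := by
        rw [mul_comm]
        gcongr
        rwa [le_div_iff₀ (by positivity)]
      _ = _ := by
        rw [ordinaryHypergeometricCoefficient_succ]
        push_cast
        field_simp

lemma not_summable_ordinaryHypergeometricCoefficient (ha : 0 < a) (hb : 0 < b) (hc : 0 < c)
    (hcab : c ≤ a + b) : ¬Summable (ordinaryHypergeometricCoefficient a b c) := by
  refine fun h ↦ Real.not_summable_one_div_natCast <|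
    (h.mul_left (c / (a * b))).of_nonneg_of_le (fun n ↦ by positivity) fun n ↦ ?_
  rcases n.eq_zero_or_pos with rfl | hn
  · simpa using mul_nonneg (by positivity) (ordinaryHypergeometricCoefficient_pos ha hb hc 0).le
  · have := div_le_natCast_mul_ordinaryHypergeometricCoefficient ha hb hc hcab hn
    rw [div_le_iff₀ (by positivity)]
    calc (1 : ℝ) = c / (a * b) * (a * b / c) := by field_simp
      _ ≤ _ := by rw [mul_assoc]; gcongr; linarith

lemma tendsto_ordinaryHypergeometric_nhdsLT_one_atTop (ha : 0 < a) (hb : 0 < b) (hc : 0 < c)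
    (hcab : c ≤ a + b) : Tendsto (fun x : ℝ ↦ ₂F₁ a b c x) (𝓝[<] 1) atTop := by
  simp only [ordinaryHypergeometric_eq_tsum_mul]
  exact Real.tendsto_tsum_powerSeries_nhdsLT_one_atTop
    (fun n ↦ (ordinaryHypergeometricCoefficient_pos ha hb hc n).le)
    (not_summable_ordinaryHypergeometricCoefficient ha hb hc hcab) fun x hx ↦
      summable_ordinaryHypergeometricCoefficient_mul_pow ha hb hc
        (abs_lt.2 ⟨by linarith [hx.1], hx.2⟩)

/-- The `n`-th term of the expansion of Euler's integrand `x^(b-1) (1-x)^(c-b-1) (1-x)^(-a)` in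
powers of `x`. -/
noncomputable def eulerTerm (a b c : ℝ) (n : ℕ) (x : ℝ) : ℝ :=
  (ascPochhammer ℝ n).eval a / n.factorial * (x ^ (b + n - 1) * (1 - x) ^ (c - b - 1))

lemma eulerTerm_nonneg (ha : 0 < a) (n : ℕ) (hx : x ∈ Ioo 0 1) : 0 ≤ eulerTerm a b c n x := by
  have := ascPochhammer_pos n a ha
  have := sub_pos.2 hx.2
  have := hx.1
  unfold eulerTerm
  positivity

lemma hasSum_eulerTerm (hx : x ∈ Ioo 0 1) :
    HasSum (fun n ↦ eulerTerm a b c n x) (x ^ (b - 1) * (1 - x) ^ (c - a - b - 1)) := by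
  have hx₀ := hx.1
  have hx₁ := sub_pos.2 hx.2
  have h := (Real.hasSum_ascPochhammer_div_factorial_mul_pow a (x := x)
    (abs_lt.2 ⟨by linarith, hx.2⟩)).mul_right (x ^ (b - 1) * (1 - x) ^ (c - b - 1))
  have hsum : (1 - x) ^ (-a) * (x ^ (b - 1) * (1 - x) ^ (c - b - 1)) =
      x ^ (b - 1) * (1 - x) ^ (c - a - b - 1) := by
    rw [mul_left_comm, ← Real.rpow_add hx₁]
    ring_nf
  refine hsum ▸ h.congr_fun fun n ↦ ?_
  rw [eulerTerm, add_sub_right_comm, Real.rpow_add hx₀, Real.rpow_natCast]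
  ring

lemma integral_eulerTerm (hb : 0 < b) (hbc : b < c) (n : ℕ) :
    ∫ x in Ioo 0 1, eulerTerm a b c n x =
      ordinaryHypergeometricCoefficient a b c n * beta b (c - b) := by
  have h := integral_rpow_mul_one_sub_rpow (p := b + n) (q := c - b) (by positivity) (sub_pos.2 hbc)
  rw [beta_add_nat hb (sub_pos.2 hbc), add_sub_cancel] at h
  have := (ascPochhammer_pos n c (hb.trans hbc)).ne'
  simp only [eulerTerm, integral_const_mul, h, ordinaryHypergeometricCoefficient]
  field_simp

/-- **Gauss's summation theorem** for `₂F₁(a, b; c; 1)`. -/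
theorem hasSum_ordinaryHypergeometricCoefficient (ha : 0 < a) (hb : 0 < b) (hcab : a + b < c) :
    HasSum (ordinaryHypergeometricCoefficient a b c)
      (Real.Gamma c * Real.Gamma (c - a - b) / (Real.Gamma (c - a) * Real.Gamma (c - b))) := by
  have hbc : 0 < c - b := by linarith
  have hcab' : 0 < c - a - b := by linarith
  have h := hasSum_integral_of_dominated_convergence (μ := volume.restrict (Ioo 0 1))
    (F := eulerTerm a b c) (eulerTerm a b c) (fun n ↦ by unfold eulerTerm; fun_prop)
    (fun n ↦ ae_restrict_of_forall_mem measurableSet_Ioo fun x hx ↦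
      (Real.norm_of_nonneg (eulerTerm_nonneg ha n hx)).le)
    (ae_restrict_of_forall_mem measurableSet_Ioo fun x hx ↦ (hasSum_eulerTerm hx).summable)
    ((integrableOn_rpow_mul_one_sub_rpow hb hcab').congr_fun
      (fun x hx ↦ (hasSum_eulerTerm hx).tsum_eq.symm) measurableSet_Ioo)
    (ae_restrict_of_forall_mem measurableSet_Ioo fun x hx ↦ hasSum_eulerTerm hx)
  simp only [integral_eulerTerm hb (by linarith), integral_rpow_mul_one_sub_rpow hb hcab'] at h
  have hval : Real.Gamma c * Real.Gamma (c - a - b) / (Real.Gamma (c - a) * Real.Gamma (c - b)) *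
      beta b (c - b) = beta b (c - a - b) := by
    have := (Real.Gamma_pos_of_pos (show 0 < c by linarith)).ne'
    have := (Real.Gamma_pos_of_pos (show 0 < c - a by linarith)).ne'
    have := (Real.Gamma_pos_of_pos hbc).ne'
    simp only [beta, add_sub_cancel, show b + (c - a - b) = c - a by ring]
    field_simp
  rwa [← hasSum_mul_right_iff (beta_pos hb hbc).ne', hval]

theorem ordinaryHypergeometric_one_eq_Gamma (ha : 0 < a) (hb : 0 < b)
    (hcab : a + b < c) :
    ₂F₁ a b c (1 : ℝ) =
      Real.Gamma c * Real.Gamma (c - a - b) / (Real.Gamma (c - a) * Real.Gamma (c - b)) := by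
  simpa [ordinaryHypergeometric_eq_tsum_mul] using
    (hasSum_ordinaryHypergeometricCoefficient ha hb hcab).tsum_eq

end RealHypergeometric

lemma hyperF_ofReal (a b c x : ℝ) : hyperF a b c x = ₂F₁ a b c x := by
  rw [hyperF, ordinaryHypergeometric_eq_tsum_mul, Complex.ofReal_tsum]
  refine tsum_congr fun n ↦ ?_
  simp only [ordinaryHypergeometricCoefficient, ascPochhammer_eval_eq_prod_range]
  push_cast
  ring

lemma hyperF_ofReal_im_eq_zero_and_re_pos {a b c x : ℝ} (ha : 0 < a) (hb : 0 < b) (hc : 0 < c)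
    (hx₀ : 0 ≤ x) (hx₁ : x < 1) : (hyperF a b c x).im = 0 ∧ 0 < (hyperF a b c x).re := by
  rw [hyperF_ofReal, ofReal_im, ofReal_re]
  exact ⟨rfl, one_pos.trans_le (one_le_ordinaryHypergeometric ha hb hc hx₀ hx₁)⟩

lemma betaFn_ofReal (x y : ℝ) : betaFn x y = beta x y := by
  simp [betaFn, beta, ← Complex.ofReal_add, Complex.Gamma_ofReal]

lemma beta_one_sixth_one_half_div_pi :
    beta (1/6) (1/2) / π = √3 * ₂F₁ (1/6 : ℝ) (1/2) 1 (1 : ℝ) := by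
  have h₁ : Real.Gamma (1/6) * Real.Gamma (5/6) = 2 * π := by
    have := Real.Gamma_mul_Gamma_one_sub (1/6)
    rw [show π * (1/6) = π / 6 by ring, Real.sin_pi_div_six] at this
    norm_num at this
    linarith
  have h₂ : Real.Gamma (1/3) * Real.Gamma (2/3) * √3 = 2 * π := by
    have := Real.Gamma_mul_Gamma_one_sub (1/3)
    rw [show π * (1/3) = π / 3 by ring, Real.sin_pi_div_three] at this
    norm_num at this
    rw [this]
    field_simp
  have h₃ : Real.Gamma (1/2) ^ 2 = π := by
    rw [Real.Gamma_one_half_eq, Real.sq_sqrt Real.pi_pos.le]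
  have := (Real.Gamma_pos_of_pos (by norm_num : (0 : ℝ) < 2/3)).ne'
  have := (Real.Gamma_pos_of_pos (by norm_num : (0 : ℝ) < 5/6)).ne'
  have := (Real.Gamma_pos_of_pos (by norm_num : (0 : ℝ) < 1/2)).ne'
  rw [ordinaryHypergeometric_one_eq_Gamma (by norm_num) (by norm_num) (by norm_num), Real.Gamma_one,
    beta, show (1/6 : ℝ) + 1/2 = 2/3 by norm_num, show (1 : ℝ) - 1/6 - 1/2 = 1/3 by norm_num,
    show (1 : ℝ) - 1/6 = 5/6 by norm_num, show (1 : ℝ) - 1/2 = 1/2 by norm_num]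
  field_simp
  linear_combination Real.Gamma (1/2) ^ 2 * h₁ + 2 * π * h₃ - π * h₂

lemma omegaC_sq : omegaC ^ 2 = omegaC - √3 * I := by
  have h : (√3 : ℂ) ^ 2 = 3 := by exact_mod_cast Real.sq_sqrt (by norm_num : (0 : ℝ) ≤ 3)
  rw [omegaC]
  linear_combination (I ^ 2 / 4) * h + (3 / 4 : ℂ) * I_sq

lemma omegaC_re : omegaC.re = -1/2 := by simp [omegaC]

lemma omegaC_im : omegaC.im = √3 / 2 := by simp [omegaC]

noncomputable def phi1Ratio (z : ℝ) : ℝ :=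
  ₂F₁ (1/6 : ℝ) (1/2) 1 1 * ₂F₁ (1/6 : ℝ) (1/2) (2/3) (1 - z) / ₂F₁ (1/6 : ℝ) (1/2) 1 z

lemma phi1_ofReal (z : ℝ) : phi1 z = omegaC + ((√3 * (phi1Ratio z - 1) : ℝ) : ℂ) * I := by
  have h₁ := hyperF_ofReal (1/6) (1/2) (2/3) (1 - z)
  have h₂ := hyperF_ofReal (1/6) (1/2) 1 z
  have hβ := betaFn_ofReal (1/6) (1/2)
  push_cast at h₁ h₂ hβ
  rw [phi1, omegaC_sq, hβ, ← ofReal_div, beta_one_sixth_one_half_div_pi, h₁, h₂, phi1Ratio]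
  push_cast
  ring

lemma summable_ordinaryHypergeometricCoefficient_one_sixth_one_half_one :
    Summable (ordinaryHypergeometricCoefficient (1/6 : ℝ) (1/2) 1) :=
  (hasSum_ordinaryHypergeometricCoefficient (by norm_num) (by norm_num) (by norm_num)).summable

lemma one_lt_ordinaryHypergeometric_one_sixth_one_half_one :
    1 < ₂F₁ (1/6 : ℝ) (1/2) 1 (1 : ℝ) := by
  simpa using ordinaryHypergeometric_lt_of_summable (x := 0) (by norm_num) (by norm_num)
    (by norm_num) summable_ordinaryHypergeometricCoefficient_one_sixth_one_half_one le_rfl one_pos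

lemma one_lt_phi1Ratio {z : ℝ} (hz₀ : 0 < z) (hz₁ : z < 1) : 1 < phi1Ratio z := by
  have hF₁ := one_le_ordinaryHypergeometric (a := 1/6) (b := 1/2) (c := 2/3) (by norm_num)
    (by norm_num) (by norm_num) (sub_nonneg.2 hz₁.le) (sub_lt_self 1 hz₀)
  have hF₂ := one_le_ordinaryHypergeometric (a := 1/6) (b := 1/2) (c := 1) (by norm_num)
    (by norm_num) (by norm_num) hz₀.le hz₁
  have hlt := ordinaryHypergeometric_lt_of_summable (by norm_num) (by norm_num) (by norm_num)
    summable_ordinaryHypergeometricCoefficient_one_sixth_one_half_one hz₀.le hz₁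
  rw [phi1Ratio, one_lt_div (by linarith)]
  nlinarith

lemma tendsto_one_sub_nhdsGT_zero : Tendsto (fun z : ℝ ↦ 1 - z) (𝓝[>] 0) (𝓝[<] 1) :=
  tendsto_nhdsWithin_of_tendsto_nhds_of_eventually_within _
    (((continuous_const.sub continuous_id).tendsto' 0 1 (sub_zero (1 : ℝ))).mono_left
      nhdsWithin_le_nhds)
    (by filter_upwards [self_mem_nhdsWithin] with z hz using sub_lt_self 1 hz.out)

lemma tendsto_phi1Ratio_nhdsGT_zero : Tendsto phi1Ratio (𝓝[>] 0) atTop := by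
  have hF₁ := (tendsto_ordinaryHypergeometric_nhdsLT_one_atTop (a := 1/6) (b := 1/2) (c := 2/3)
    (by norm_num) (by norm_num) (by norm_num) (by norm_num)).comp tendsto_one_sub_nhdsGT_zero
  have hF₂ := (tendsto_ordinaryHypergeometric_nhds_zero (a := 1/6) (b := 1/2) (c := 1)
    (by norm_num) (by norm_num) (by norm_num)).mono_left (nhdsWithin_le_nhds (s := Ioi 0))
  have hS := one_pos.trans one_lt_ordinaryHypergeometric_one_sixth_one_half_one
  refine (hF₁.atTop_mul_pos (div_pos hS one_pos) (tendsto_const_nhds.div hF₂ one_ne_zero)).congr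
    fun z ↦ ?_
  simp only [Function.comp_apply, Pi.div_apply, phi1Ratio]
  ring

lemma tendsto_phi1Ratio_nhdsLT_one : Tendsto phi1Ratio (𝓝[<] 1) (𝓝 1) := by
  have hF₁ := (tendsto_ordinaryHypergeometric_nhds_zero (a := 1/6) (b := 1/2) (c := 2/3)
    (by norm_num) (by norm_num) (by norm_num)).comp
    (((continuous_const.sub continuous_id).tendsto' 1 0 (sub_self (1 : ℝ))).mono_left
      (nhdsWithin_le_nhds (s := Iio 1)))
  have hF₂ := tendsto_ordinaryHypergeometric_nhdsLT_one
    summable_ordinaryHypergeometricCoefficient_one_sixth_one_half_one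
  have hS := (one_pos.trans one_lt_ordinaryHypergeometric_one_sixth_one_half_one).ne'
  have h := ((tendsto_const_nhds (x := ₂F₁ (1/6 : ℝ) (1/2) 1 (1 : ℝ))).mul hF₁).div hF₂ hS
  rw [mul_one, div_self hS] at h
  exact h.congr fun z ↦ rfl

lemma phi1_re (z : ℝ) : (phi1 z).re = -1/2 := by
  simp [phi1_ofReal, omegaC_re]

lemma phi1_im (z : ℝ) : (phi1 z).im = √3 * phi1Ratio z - √3 / 2 := by
  simp only [phi1_ofReal, add_im, omegaC_im, mul_I_im, ofReal_re]
  ring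

/-- Behavior of Schwarz's map `φ₁` on the interval `(0,1)`. -/
theorem phi1_on_interval :
    (∀ z : ℝ, 0 < z → z < 1 →
      ((hyperF (1/6) (1/2) (2/3) (1 - (z : ℂ))).im = 0 ∧
        0 < (hyperF (1/6) (1/2) (2/3) (1 - (z : ℂ))).re) ∧
      ((hyperF (1/6) (1/2) 1 (z : ℂ)).im = 0 ∧
        0 < (hyperF (1/6) (1/2) 1 (z : ℂ)).re) ∧
      (phi1 (z : ℂ)).re = -1/2 ∧ Real.sqrt 3 / 2 < (phi1 (z : ℂ)).im) ∧
    Filter.Tendsto (fun z : ℝ => (phi1 (z : ℂ)).im)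
      (nhdsWithin 0 (Set.Ioo 0 1)) Filter.atTop ∧
    Filter.Tendsto (fun z : ℝ => phi1 (z : ℂ))
      (nhdsWithin 1 (Set.Ioo 0 1)) (nhds omegaC) := by
  refine ⟨fun z hz₀ hz₁ ↦ ⟨?_, ?_, phi1_re z, ?_⟩, ?_, ?_⟩
  · have h := hyperF_ofReal_im_eq_zero_and_re_pos (a := 1/6) (b := 1/2) (c := 2/3) (by norm_num)
      (by norm_num) (by norm_num) (sub_nonneg.2 hz₁.le) (sub_lt_self 1 hz₀)
    push_cast at h
    exact h
  · have h := hyperF_ofReal_im_eq_zero_and_re_pos (a := 1/6) (b := 1/2) (c := 1) (by norm_num)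
      (by norm_num) (by norm_num) hz₀.le hz₁
    push_cast at h
    exact h
  · rw [phi1_im]
    nlinarith [one_lt_phi1Ratio hz₀ hz₁, Real.sqrt_pos.2 (show (0 : ℝ) < 3 by norm_num)]
  · simp only [phi1_im, nhdsWithin_Ioo_eq_nhdsGT zero_lt_one]
    exact tendsto_atTop_add_const_right _ _ (tendsto_phi1Ratio_nhdsGT_zero.const_mul_atTop
      (Real.sqrt_pos.2 (by norm_num)))
  · rw [nhdsWithin_Ioo_eq_nhdsLT zero_lt_one]
    have h := ((by fun_prop : Continuous fun t : ℝ ↦ omegaC + ((√3 * (t - 1) : ℝ) : ℂ) * I).tendsto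
      1).comp tendsto_phi1Ratio_nhdsLT_one
    rw [sub_self, mul_zero, ofReal_zero, zero_mul, add_zero] at h
    exact h.congr fun z ↦ (phi1_ofReal z).symm
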